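/- arXiv:0904.4364 — 2 statements merged into one kernel-verified Lean document; each statement's English description precedes it below -/
import Mathlib

section
/- An event E ⊆ DS is time-superinvariant if and only if DS \ E is time-superinvariant. -/
open MeasureTheory Filter Set
open scoped ENNReal NNReal

noncomputable section

/-- The sample space: continuous functions `[0,∞) → ℝ`. -/
def Omega : Type := {f : ℝ≥0 → ℝ // Continuous f}

instance : CoeFun Omega fun _ => ℝ≥0 → ℝ := ⟨Subtype.val⟩

/-- The filtration `F t`: the smallest σ-algebra making `ω ↦ ω s` measurable for `s ≤ t`. -/
def F (t : ℝ≥0∞) : MeasurableSpace Omega :=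
  ⨆ (s : ℝ≥0) (_ : (s : ℝ≥0∞) ≤ t),
    MeasurableSpace.comap (fun ω : Omega => ω s) inferInstance

lemma F_mono : Monotone F := by
  intro s t hst
  refine iSup_mono fun u => ?_
  exact iSup_le fun hu => le_iSup_of_le (hu.trans hst) le_rfl

instance instMSOmega : MeasurableSpace Omega := F ⊤

/-- The filtration as a Mathlib `Filtration`. -/
def FF : Filtration ℝ≥0∞ instMSOmega where
  seq := F
  mono' := F_mono
  le' := fun t => F_mono le_top

/-- Evaluation of a path at an extended time (times `≥ ∞` are sent to `0`). -/
def evalE (ω : Omega) (t : ℝ≥0∞) : ℝ := ω t.toNNReal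

/-- A simple trading strategy. -/
structure SimpleStrategy where
  τ : ℕ → Omega → ℝ≥0∞
  bet : ℕ → Omega → ℝ
  isStopping : ∀ n, IsStoppingTime FF (fun ω => ((τ n ω : ℝ≥0∞) : WithTop ℝ≥0∞))
  mono : ∀ n ω, τ n ω ≤ τ (n + 1) ω
  tendsto_top : ∀ ω, Tendsto (fun n => τ n ω) atTop (nhds ⊤)
  bet_measurable : ∀ n, Measurable[(isStopping n).measurableSpace] (bet n)
  bet_bounded : ∀ n, ∃ C : ℝ, ∀ ω, |bet n ω| ≤ C

/-- The simple capital process of a simple trading strategy with initial capital `c`. -/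
def simpleCapital (G : SimpleStrategy) (c : ℝ) (t : ℝ≥0) (ω : Omega) : ℝ :=
  c + ∑' n : ℕ, G.bet n ω *
    (evalE ω (G.τ (n + 1) ω ⊓ (t : ℝ≥0∞)) - evalE ω (G.τ n ω ⊓ (t : ℝ≥0∞)))

/-- A positive capital process: a countable sum of nonnegative simple capital processes. -/
structure PositiveCapital where
  G : ℕ → SimpleStrategy
  c : ℕ → ℝ
  c_nonneg : ∀ n, 0 ≤ c n
  c_summable : Summable c
  nonneg : ∀ n (t : ℝ≥0) ω, 0 ≤ simpleCapital (G n) (c n) t ω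

/-- Value of a positive capital process at time `t` on path `ω`. -/
def PositiveCapital.val (S : PositiveCapital) (t : ℝ≥0) (ω : Omega) : ℝ≥0∞ :=
  ∑' n : ℕ, ENNReal.ofReal (simpleCapital (S.G n) (S.c n) t ω)

/-- Initial value of a positive capital process. -/
def PositiveCapital.init (S : PositiveCapital) : ℝ≥0∞ :=
  ∑' n : ℕ, ENNReal.ofReal (S.c n)

/-- Outer content of a set of paths. -/
def outerContent (E : Set Omega) : ℝ≥0∞ :=
  ⨅ (S : PositiveCapital)
    (_ : ∀ ω ∈ E, 1 ≤ liminf (fun t : ℝ≥0 => S.val t ω) atTop), S.init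

/-- Restricted outer content. -/
def outerContentOn (E B : Set Omega) : ℝ≥0∞ := outerContent (E ∩ B)

/-- Restricted inner content. -/
def innerContentOn (E B : Set Omega) : ℝ≥0∞ := 1 - outerContentOn Eᶜ B

/-- A time change: continuous, increasing, starting at `0`. -/
structure TimeChange where
  f : ℝ≥0 → ℝ≥0
  continuous : Continuous f
  monotone : Monotone f
  map_zero : f 0 = 0

/-- Action of a time change on a path. -/
def TimeChange.act (g : TimeChange) (ω : Omega) : Omega :=
  ⟨fun t => ω (g.f t), ω.2.comp g.continuous⟩

/-- A set of paths is time-superinvariant if `ω∘f ∈ E` implies `ω ∈ E` for all time changes. -/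
def TimeSuperinvariant (E : Set Omega) : Prop :=
  ∀ (ω : Omega) (g : TimeChange), g.act ω ∈ E → ω ∈ E

/-- `P` is the Wiener measure started at `c`. -/
def IsWiener (c : ℝ) (P : Measure Omega) : Prop :=
  IsProbabilityMeasure P ∧
  P {ω : Omega | ω 0 = c} = 1 ∧
  ∀ s t : ℝ≥0, s < t →
    ProbabilityTheory.Indep (F s)
      (MeasurableSpace.comap (fun ω : Omega => ω t - ω s) inferInstance) P ∧
    P.map (fun ω : Omega => ω t - ω s) = ProbabilityTheory.gaussianReal 0 (t - s)


def NowhereConstant (ω : Omega) : Prop :=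
  ∀ t₁ t₂ : ℝ≥0, t₁ < t₂ → ∃ s₁ ∈ Set.Ioo t₁ t₂, ∃ s₂ ∈ Set.Ioo t₁ t₂, ω s₁ ≠ ω s₂

/-- `ω` is divergent: it has no finite limit at infinity. -/
def Divergent (ω : Omega) : Prop :=
  ¬ ∃ c : ℝ, Tendsto (fun t => ω t) atTop (nhds c)

/-- The divergent and nowhere constant paths. -/
def DS : Set Omega := {ω | Divergent ω ∧ NowhereConstant ω}

/-- `ω` is constant on `[u,v]`. -/
def ConstOn (ω : Omega) (u v : ℝ≥0) : Prop := ∀ s ∈ Set.Icc u v, ω s = ω u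

/-- `t` is a point of increase of `ω`. -/
def PointOfIncrease (ω : Omega) (t : ℝ≥0) : Prop :=
  ∃ δ : ℝ≥0, 0 < δ ∧ ∀ t₁ t₂ : ℝ≥0, t - δ < t₁ → t₁ < t → t < t₂ → t₂ < t + δ →
    ω t₁ ≤ ω t ∧ ω t ≤ ω t₂

/-- `t` is a point of decrease of `ω`. -/
def PointOfDecrease (ω : Omega) (t : ℝ≥0) : Prop :=
  ∃ δ : ℝ≥0, 0 < δ ∧ ∀ t₁ t₂ : ℝ≥0, t - δ < t₁ → t₁ < t → t < t₂ → t₂ < t + δ →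
    ω t₁ ≥ ω t ∧ ω t ≥ ω t₂

/-- `ω` is locally constant to the right of `t`. -/
def LocallyConstantRight (ω : Omega) (t : ℝ≥0) : Prop :=
  ∃ δ : ℝ≥0, 0 < δ ∧ ∀ s ∈ Set.Icc t (t + δ), ω s = ω t

/-- The `p`-variation of `ω` over `[u,v]`. -/
def pVar (ω : Omega) (u v : ℝ≥0) (p : ℝ) : ℝ≥0∞ :=
  ⨆ (n : ℕ) (t : ℕ → ℝ≥0) (_ : Monotone t) (_ : t 0 = u) (_ : t n = v),
    ∑ i ∈ Finset.range n, ENNReal.ofReal (|ω (t (i + 1)) - ω (t i)| ^ p)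

/-- `ln* u = max(1, |ln u|)`. -/
def lnStar (u : ℝ) : ℝ := max 1 |Real.log u|

/-- Taylor's function `ψ(u) = u²/(2 ln* ln* u)`, with `ψ(0)=0`. -/
def taylorPsi (u : ℝ) : ℝ := if u = 0 then 0 else u ^ 2 / (2 * lnStar (lnStar u))

/-- The `φ`-variation of `ω` over `[0,T]`. -/
def phiVar (φ : ℝ → ℝ) (T : ℝ≥0) (ω : Omega) : ℝ≥0∞ :=
  ⨆ (n : ℕ) (t : ℕ → ℝ≥0) (_ : Monotone t) (_ : t 0 = 0) (_ : t n = T),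
    ∑ i ∈ Finset.range n, ENNReal.ofReal (φ |ω (t (i + 1)) - ω (t i)|)

/-- Taylor's quadratic variation `qvar_T(ω)`. -/
def qvar (T : ℝ≥0) (ω : Omega) : ℝ≥0∞ :=
  ⨅ (δ : ℝ) (_ : 0 < δ),
    ⨆ (n : ℕ) (t : ℕ → ℝ≥0) (_ : Monotone t) (_ : t 0 = 0) (_ : t n = T)
      (_ : ∀ i < n, (t (i + 1) : ℝ) - t i < δ),
      ∑ i ∈ Finset.range n, ENNReal.ofReal (taylorPsi |ω (t (i + 1)) - ω (t i)|)


/-- The dyadic grid `D_n`. -/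
def grid (n : ℕ) : Set ℝ := {x | ∃ k : ℤ, x = k * (2 : ℝ) ^ (-(n : ℤ))}

/-- Hitting times of the grid `D_n`: `hitT n k` is `T^n_{k-1}` of the paper (so `hitT n 0 = 0`). -/
def hitT (n : ℕ) : ℕ → Omega → ℝ≥0∞
  | 0, _ => 0
  | 1, ω => ⨅ (t : ℝ≥0) (_ : ω t ∈ grid n), (t : ℝ≥0∞)
  | (k + 2), ω =>
      ⨅ (t : ℝ≥0) (_ : hitT n (k + 1) ω ≤ (t : ℝ≥0∞) ∧ ω t ∈ grid n ∧
          ω t ≠ evalE ω (hitT n (k + 1) ω)), (t : ℝ≥0∞)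

/-- The approximating quadratic variation process `A^n_t`. -/
def Aproc (n : ℕ) (t : ℝ≥0) (ω : Omega) : ℝ≥0∞ :=
  ∑' k : ℕ, ENNReal.ofReal
    ((evalE ω (hitT n (k + 1) ω ⊓ (t : ℝ≥0∞)) - evalE ω (hitT n k ω ⊓ (t : ℝ≥0∞))) ^ 2)

/-- `Ā_t`. -/
def upA (t : ℝ≥0) (ω : Omega) : ℝ≥0∞ := limsup (fun n => Aproc n t ω) atTop

/-- `A̲_t`. -/
def lowA (t : ℝ≥0) (ω : Omega) : ℝ≥0∞ := liminf (fun n => Aproc n t ω) atTop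

/-- The stopping times `τ_s` used for the normalizing time change. -/
def tauQ (s : ℝ≥0) (ω : Omega) : ℝ≥0∞ :=
  ⨅ (t : ℝ≥0) (_ : (∀ u : ℝ≥0, u < t → upA u ω = lowA u ω ∧ upA u ω ≠ ⊤) ∧
      ContinuousOn (fun u : ℝ≥0 => (upA u ω).toReal) (Set.Iio t) ∧
      (⨆ u ∈ Set.Iio t, upA u ω) = (⨆ u ∈ Set.Iio t, lowA u ω) ∧
      (s : ℝ≥0∞) ≤ ⨆ u ∈ Set.Iio t, upA u ω),
    (t : ℝ≥0∞)

/-- The normalizing time change applied to `ω` (with `ω(∞) := 0`). -/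
def ntMap (ω : Omega) : ℝ≥0 → ℝ :=
  fun s => if tauQ s ω = ⊤ then 0 else ω (tauQ s ω).toNNReal

/-- Preimage of a set of paths under the normalizing time change. -/
def ntPre (E : Set Omega) : Set Omega :=
  {ω | ∃ hc : Continuous (ntMap ω), (⟨ntMap ω, hc⟩ : Omega) ∈ E}

/-- The event `A_∞ = ∞`. -/
def AInfty : Set Omega :=
  {ω | (∀ t : ℝ≥0, upA t ω = lowA t ω) ∧ Tendsto (fun t : ℝ≥0 => upA t ω) atTop (nhds ⊤)}

/-! A time change `g` with `ω ∘ g ∈ DS` is forced to be an order automorphism of `[0,∞)`: it is strictly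
increasing because `ω ∘ g` is nowhere constant, and unbounded, hence onto, because `ω ∘ g` diverges. So
`ω = (ω ∘ g) ∘ g⁻¹` with `g⁻¹` again a time change, and `ω` itself lies in `DS`. Membership of `ω ∘ g` in `E`,
or in `DS \ E`, is therefore carried back to `ω` by the time change `g⁻¹`. -/

namespace TimeChange

def ofOrderIso (e : ℝ≥0 ≃o ℝ≥0) : TimeChange :=
  ⟨e, e.continuous, e.monotone, by simpa only [bot_eq_zero] using e.map_bot⟩

variable {g : TimeChange} {ω : Omega}

lemma act_act_of_leftInverse {h : TimeChange} (hgh : Function.LeftInverse g.f h.f) :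
    h.act (g.act ω) = ω :=
  Subtype.ext <| funext fun t => congrArg ω (hgh t)

lemma strictMono_of_nowhereConstant_act (hω : NowhereConstant (g.act ω)) : StrictMono g.f := by
  intro a b hlt
  refine (g.monotone hlt.le).lt_of_ne fun hab => ?_
  obtain ⟨s₁, hs₁, s₂, hs₂, hω₁₂⟩ := hω a b hlt
  have hconst : ∀ s ∈ Ioo a b, g.f s = g.f a := fun s hs =>
    le_antisymm (hab ▸ g.monotone hs.2.le) (g.monotone hs.1.le)
  exact hω₁₂ (congrArg ω ((hconst s₁ hs₁).trans (hconst s₂ hs₂).symm))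

lemma tendsto_atTop_of_divergent_act (hω : Divergent (g.act ω)) : Tendsto g.f atTop atTop := by
  refine tendsto_atTop_atTop_of_monotone' g.monotone fun hbdd => hω ?_
  exact ⟨ω (⨆ t, g.f t), (ω.2.tendsto _).comp (tendsto_atTop_ciSup g.monotone hbdd)⟩

lemma surjective_of_tendsto_atTop (hg : Tendsto g.f atTop atTop) : Function.Surjective g.f := by
  intro y
  obtain ⟨t, ht⟩ := (hg.eventually (eventually_ge_atTop y)).exists
  obtain ⟨x, -, hx⟩ := intermediate_value_Icc (bot_le : 0 ≤ t) g.continuous.continuousOn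
    ⟨by simp [g.map_zero], ht⟩
  exact ⟨x, hx⟩

lemma divergent_of_divergent_act (hg : Tendsto g.f atTop atTop) (hω : Divergent (g.act ω)) :
    Divergent ω :=
  fun ⟨c, hc⟩ => hω ⟨c, hc.comp hg⟩

lemma nowhereConstant_of_nowhereConstant_act (hmono : StrictMono g.f)
    (hsurj : Function.Surjective g.f) (hω : NowhereConstant (g.act ω)) : NowhereConstant ω := by
  intro t₁ t₂ h₁₂
  obtain ⟨a₁, rfl⟩ := hsurj t₁
  obtain ⟨a₂, rfl⟩ := hsurj t₂
  obtain ⟨s₁, hs₁, s₂, hs₂, hne⟩ := hω a₁ a₂ (hmono.lt_iff_lt.mp h₁₂)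
  exact ⟨g.f s₁, ⟨hmono hs₁.1, hmono hs₁.2⟩, g.f s₂, ⟨hmono hs₂.1, hmono hs₂.2⟩, hne⟩

lemma mem_DS_and_exists_act_act_eq_of_act_mem_DS (hω : g.act ω ∈ DS) :
    ω ∈ DS ∧ ∃ h : TimeChange, h.act (g.act ω) = ω := by
  obtain ⟨hdiv, hnc⟩ := hω
  have hmono := strictMono_of_nowhereConstant_act hnc
  have htop := tendsto_atTop_of_divergent_act hdiv
  have hsurj := surjective_of_tendsto_atTop htop
  refine ⟨⟨divergent_of_divergent_act htop hdiv,
    nowhereConstant_of_nowhereConstant_act hmono hsurj hnc⟩,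
    ofOrderIso (hmono.orderIsoOfSurjective g.f hsurj).symm, act_act_of_leftInverse ?_⟩
  exact StrictMono.orderIsoOfSurjective_self_symm_apply g.f hmono hsurj

end TimeChange

/-- An event `E ⊆ DS` is time-superinvariant iff `DS \ E` is time-superinvariant. -/
theorem timeSuperinvariant_iff_diff_timeSuperinvariant (E : Set Omega) (hE : E ⊆ DS) :
    TimeSuperinvariant E ↔ TimeSuperinvariant (DS \ E) := by
  constructor
  · intro hEinv ω g hmem
    obtain ⟨hωDS, h, hinv⟩ := TimeChange.mem_DS_and_exists_act_act_eq_of_act_mem_DS hmem.1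
    exact ⟨hωDS, fun hωE => hmem.2 (hEinv _ h (by rwa [hinv]))⟩
  · intro hDSinv ω g hmem
    obtain ⟨hωDS, h, hinv⟩ := TimeChange.mem_DS_and_exists_act_act_eq_of_act_mem_DS (hE hmem)
    by_contra hωE
    exact (hDSinv _ h (by rw [hinv]; exact ⟨hωDS, hωE⟩)).2 hmem

end
end

section
/- Let E ⊆ Ω be an event such that, for some continuous martingale M = (M_t)_{t∈[0,∞)} on some filtered probability space, the sample path t ↦ M_t belongs to E almost surely. Then P̄(E) = 1. -/
open MeasureTheory Filter Set
open scoped ENNReal NNReal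

noncomputable section

/-!
Let `S` be a positive capital process with `liminf S_t ≥ 1` on `E`, and run it on the paths of
`M`. Each simple strategy bets a bounded amount, fixed at a stopping time `σ`, on the increment
of `M` up to a later stopping time `τ ≤ t`; optional sampling makes that gain have mean zero, so
every partial sum of a simple capital process has mean equal to its initial capital. Optional
sampling at a general bounded stopping time `τ` follows from the countably-valued case by rounding
`τ` up to the grid `ℕ / (k + 1)` and passing to the limit, using continuity of the paths and
uniform integrability of conditional expectations. Fatou's lemma, first along the partial sums
and then in time, gives `1 ≤ E[liminf_t S_t(M)] ≤ S_0`; the strategy that never bets gives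
`P̄(E) ≤ 1`.
-/

open Topology

namespace NNReal

def gridCeil (k : ℕ) (x : ℝ≥0) : ℝ≥0 := ⌈x * (k + 1)⌉₊ / (k + 1)

lemma le_gridCeil (k : ℕ) (x : ℝ≥0) : x ≤ gridCeil k x := by
  rw [gridCeil, le_div_iff₀ (by positivity)]
  exact Nat.le_ceil _

lemma gridCeil_le_add (k : ℕ) (x : ℝ≥0) : gridCeil k x ≤ x + 1 / (k + 1) := by
  rw [gridCeil, div_le_iff₀ (by positivity), add_mul, one_div_mul_cancel (by positivity)]
  exact (Nat.ceil_lt_add_one (by positivity)).le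

lemma gridCeil_le_iff {k : ℕ} {x u : ℝ≥0} :
    gridCeil k x ≤ u ↔ x ≤ ⌊u * (k + 1)⌋₊ / (k + 1) := by
  rw [gridCeil, div_le_iff₀ (by positivity), le_div_iff₀ (by positivity),
    ← Nat.le_floor_iff (by positivity), Nat.ceil_le]

lemma gridFloor_le (k : ℕ) (u : ℝ≥0) : (⌊u * (k + 1)⌋₊ : ℝ≥0) / (k + 1) ≤ u := by
  rw [div_le_iff₀ (by positivity)]
  exact Nat.floor_le (by positivity)

lemma tendsto_gridCeil (x : ℝ≥0) : Tendsto (fun k => gridCeil k x) atTop (𝓝 x) := by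
  have h : Tendsto (fun k : ℕ => x + 1 / ((k : ℝ≥0) + 1)) atTop (𝓝 x) := by
    simpa using tendsto_const_nhds.add (tendsto_one_div_add_atTop_nhds_zero_nat (𝕜 := ℝ≥0))
  exact tendsto_of_tendsto_of_tendsto_of_le_of_le tendsto_const_nhds h (le_gridCeil · x)
    (gridCeil_le_add · x)

lemma range_gridCeil_subset (k : ℕ) :
    range (gridCeil k) ⊆ range fun m : ℕ => (m : ℝ≥0) / (k + 1) := by
  rintro _ ⟨x, rfl⟩
  exact ⟨_, rfl⟩

end NNReal

namespace MeasureTheory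

section Pullback

variable {Ω Ω' ι : Type*} {mΩ : MeasurableSpace Ω} {mΩ' : MeasurableSpace Ω'}

lemma IsStoppingTime.measurableSet_inter_lt [LinearOrder ι] [TopologicalSpace ι]
    [OrderTopology ι] [FirstCountableTopology ι] {f : Filtration ι mΩ} {τ : Ω → WithTop ι}
    (hτ : IsStoppingTime f τ) {s : Set Ω} (hs : MeasurableSet[hτ.measurableSpace] s) (i : ι) :
    MeasurableSet[f i] (s ∩ {ω | τ ω < i}) := by
  have h := (hs.inter (hτ.measurableSet_lt' i)).2 i
  rwa [inter_assoc, inter_eq_left.mpr (ofPred_subset_ofPred.mpr fun ω => le_of_lt)] at h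

variable [Preorder ι] {𝒢 : Filtration ι mΩ} {ℱ : Filtration ι mΩ'} {φ : Ω' → Ω}
  {τ : Ω → WithTop ι}

lemma IsStoppingTime.comp_of_comap_le (hφ : ∀ i, (𝒢 i).comap φ ≤ ℱ i)
    (hτ : IsStoppingTime 𝒢 τ) : IsStoppingTime ℱ (τ ∘ φ) :=
  fun i => hφ i _ ⟨_, hτ i, rfl⟩

lemma IsStoppingTime.comap_measurableSpace_le (hφ : ∀ i, (𝒢 i).comap φ ≤ ℱ i)
    (hτ : IsStoppingTime 𝒢 τ) :
    hτ.measurableSpace.comap φ ≤ (hτ.comp_of_comap_le hφ).measurableSpace := by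
  rintro _ ⟨s, hs, rfl⟩
  refine ⟨?_, fun i => hφ i _ ⟨_, hs.2 i, rfl⟩⟩
  exact (MeasurableSpace.comap_iSup.trans_le (iSup_mono hφ)) _ ⟨s, hs.1, rfl⟩

end Pullback

section OptionalSampling

open NNReal

variable {Ω : Type*} {mΩ : MeasurableSpace Ω} {μ : Measure Ω} {ℱ : Filtration ℝ≥0 mΩ}

lemma IsStoppingTime.gridCeil_min {τ : Ω → ℝ≥0}
    (hτ : IsStoppingTime ℱ fun a => (τ a : WithTop ℝ≥0)) (k : ℕ) (T : ℝ≥0) :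
    IsStoppingTime ℱ fun a => ((min (gridCeil k (τ a)) T : ℝ≥0) : WithTop ℝ≥0) := by
  intro u
  have hτu := hτ (⌊u * (k + 1)⌋₊ / (k + 1))
  simp only [WithTop.coe_le_coe] at hτu
  simp only [WithTop.coe_le_coe, min_le_iff, gridCeil_le_iff, Set.ofPred_or]
  exact (ℱ.mono (gridFloor_le k u) _ hτu).union (MeasurableSet.const _)

lemma countable_range_gridCeil_min (k : ℕ) (T : ℝ≥0) (τ : Ω → ℝ≥0) :
    (range fun a => ((min (gridCeil k (τ a)) T : ℝ≥0) : WithTop ℝ≥0)).Countable := by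
  refine (((countable_range fun m : ℕ => (m : ℝ≥0) / (k + 1)).union
    (countable_singleton T)).image ((↑) : ℝ≥0 → WithTop ℝ≥0)).mono ?_
  rintro _ ⟨a, rfl⟩
  refine ⟨_, ?_, rfl⟩
  rcases min_choice (gridCeil k (τ a)) T with h | h
  · exact Or.inl (range_gridCeil_subset k ⟨τ a, h.symm⟩)
  · exact Or.inr h

variable {M : ℝ≥0 → Ω → ℝ} {σ τ : Ω → ℝ≥0} {T : ℝ≥0}

theorem Martingale.stoppedValue_ae_eq_condExp_of_continuous [IsFiniteMeasure μ]
    (h : Martingale M ℱ μ) (hcont : ∀ a, Continuous fun t => M t a)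
    (hτ : IsStoppingTime ℱ fun a => (τ a : WithTop ℝ≥0)) (hτT : ∀ a, τ a ≤ T) :
    stoppedValue M (fun a => τ a) =ᵐ[μ] μ[M T | hτ.measurableSpace] := by
  set σ : ℕ → Ω → ℝ≥0 := fun k a => min (gridCeil k (τ a)) T
  have hσ k : IsStoppingTime ℱ fun a => (σ k a : WithTop ℝ≥0) := hτ.gridCeil_min k T
  have hσT k a : (σ k a : WithTop ℝ≥0) ≤ T := WithTop.coe_le_coe.mpr (min_le_right _ _)
  have hτσ k : hτ.measurableSpace ≤ (hσ k).measurableSpace :=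
    hτ.measurableSpace_mono (hσ k) fun a =>
      WithTop.coe_le_coe.mpr (le_min (le_gridCeil k (τ a)) (hτT a))
  have hσ_le k : (hσ k).measurableSpace ≤ mΩ := (hσ k).measurableSpace_le_of_le (hσT k)
  -- `μ[M T | ℱ_{σ k}] = M_{σ k}` by optional sampling for countably-valued times; this family is
  -- uniformly integrable and converges to `M_τ` by continuity of the paths.
  set Y : ℕ → Ω → ℝ := fun k => μ[M T | (hσ k).measurableSpace]
  have hY_tendsto : ∀ᵐ a ∂μ, Tendsto (fun k => Y k a) atTop (𝓝 (M (τ a) a)) := by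
    have hY_eq : ∀ᵐ a ∂μ, ∀ k, M (σ k a) a = Y k a := ae_all_iff.mpr fun k =>
      h.stoppedValue_ae_eq_condExp_of_le_const_of_countable_range (hσ k) (hσT k)
        (countable_range_gridCeil_min k T τ)
    filter_upwards [hY_eq] with a ha
    simp_rw [← ha]
    refine ((hcont a).tendsto (τ a)).comp ?_
    have := (tendsto_gridCeil (τ a)).min (tendsto_const_nhds (x := T))
    rwa [min_eq_left (hτT a)] at this
  have hUI : UniformIntegrable Y 1 μ := (h.integrable T).uniformIntegrable_condExp hσ_le
  have hint : Integrable (stoppedValue M fun a => τ a) μ := hUI.integrable_of_ae_tendsto hY_tendsto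
  have hL1 : Tendsto (fun k => eLpNorm (Y k - stoppedValue M fun a => τ a) 1 μ) atTop (𝓝 0) :=
    tendsto_Lp_finite_of_tendstoInMeasure le_rfl ENNReal.one_ne_top hUI.1
      (memLp_one_iff_integrable.mpr hint) hUI.2.1
      (tendstoInMeasure_of_tendsto_ae hUI.1 hY_tendsto)
  refine ae_eq_condExp_of_forall_setIntegral_eq _ (h.integrable T)
    (fun s _ _ => hint.integrableOn) (fun s hs _ => ?_) ?_
  · refine tendsto_nhds_unique (tendsto_setIntegral_of_L1' _ hint.1
      (Eventually.of_forall fun k => integrable_condExp) hL1 s) ?_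
    exact tendsto_const_nhds.congr fun k =>
      (setIntegral_condExp (hσ_le k) (h.integrable T) (hτσ k s hs)).symm
  · exact (measurable_stoppedValue (h.stronglyAdapted.isStronglyProgressive_of_continuous hcont)
      hτ).stronglyMeasurable.aestronglyMeasurable

lemma Martingale.integrable_stoppedValue_of_continuous [IsFiniteMeasure μ]
    (h : Martingale M ℱ μ) (hcont : ∀ a, Continuous fun t => M t a)
    (hτ : IsStoppingTime ℱ fun a => (τ a : WithTop ℝ≥0)) (hτT : ∀ a, τ a ≤ T) :
    Integrable (fun a => M (τ a) a) μ :=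
  integrable_condExp.congr (h.stoppedValue_ae_eq_condExp_of_continuous hcont hτ hτT).symm

lemma Martingale.integral_mul_stoppedValue_of_continuous [IsFiniteMeasure μ]
    (h : Martingale M ℱ μ) (hcont : ∀ a, Continuous fun t => M t a)
    (hτ : IsStoppingTime ℱ fun a => (τ a : WithTop ℝ≥0)) (hτT : ∀ a, τ a ≤ T) {b : Ω → ℝ}
    {C : ℝ} (hb : StronglyMeasurable[hτ.measurableSpace] b) (hbC : ∀ a, ‖b a‖ ≤ C) :
    ∫ a, b a * M (τ a) a ∂μ = ∫ a, b a * M T a ∂μ := by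
  have hτ_le := hτ.measurableSpace_le_of_le fun a => WithTop.coe_le_coe.mpr (hτT a)
  have hbM : Integrable (b * M T) μ :=
    (h.integrable T).bdd_mul (hb.mono hτ_le).aestronglyMeasurable (ae_of_all _ hbC)
  calc ∫ a, b a * M (τ a) a ∂μ = ∫ a, (b * μ[M T | hτ.measurableSpace]) a ∂μ :=
        integral_congr_ae <| (h.stoppedValue_ae_eq_condExp_of_continuous hcont hτ hτT).mono
          fun a ha => congrArg (b a * ·) ha
    _ = ∫ a, μ[b * M T | hτ.measurableSpace] a ∂μ :=
        integral_congr_ae (condExp_mul_of_stronglyMeasurable_left hb hbM (h.integrable T)).symm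
    _ = ∫ a, b a * M T a ∂μ := integral_condExp hτ_le

lemma Martingale.integrable_mul_sub_stoppedValue_of_continuous [IsFiniteMeasure μ]
    (h : Martingale M ℱ μ) (hcont : ∀ a, Continuous fun t => M t a)
    (hσ : IsStoppingTime ℱ fun a => (σ a : WithTop ℝ≥0))
    (hτ : IsStoppingTime ℱ fun a => (τ a : WithTop ℝ≥0)) (hστ : ∀ a, σ a ≤ τ a)
    (hτT : ∀ a, τ a ≤ T) {b : Ω → ℝ} {C : ℝ} (hb : StronglyMeasurable[hσ.measurableSpace] b)
    (hbC : ∀ a, ‖b a‖ ≤ C) :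
    Integrable (fun a => b a * (M (τ a) a - M (σ a) a)) μ :=
  ((h.integrable_stoppedValue_of_continuous hcont hτ hτT).sub
    (h.integrable_stoppedValue_of_continuous hcont hσ fun a => (hστ a).trans (hτT a))).bdd_mul
      (hb.mono hσ.measurableSpace_le).aestronglyMeasurable (ae_of_all _ hbC)

theorem Martingale.integral_mul_sub_stoppedValue_eq_zero [IsFiniteMeasure μ]
    (h : Martingale M ℱ μ) (hcont : ∀ a, Continuous fun t => M t a)
    (hσ : IsStoppingTime ℱ fun a => (σ a : WithTop ℝ≥0))
    (hτ : IsStoppingTime ℱ fun a => (τ a : WithTop ℝ≥0)) (hστ : ∀ a, σ a ≤ τ a)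
    (hτT : ∀ a, τ a ≤ T) {b : Ω → ℝ} {C : ℝ} (hb : StronglyMeasurable[hσ.measurableSpace] b)
    (hbC : ∀ a, ‖b a‖ ≤ C) :
    ∫ a, b a * (M (τ a) a - M (σ a) a) ∂μ = 0 := by
  have hσT a : σ a ≤ T := (hστ a).trans (hτT a)
  have hb' : StronglyMeasurable[hτ.measurableSpace] b :=
    hb.mono (hσ.measurableSpace_mono hτ fun a => WithTop.coe_le_coe.mpr (hστ a))
  have hb_int (ρ : Ω → ℝ≥0) (hρ : IsStoppingTime ℱ fun a => (ρ a : WithTop ℝ≥0))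
      (hρT : ∀ a, ρ a ≤ T) : Integrable (fun a => b a * M (ρ a) a) μ :=
    (h.integrable_stoppedValue_of_continuous hcont hρ hρT).bdd_mul
      (hb.mono hσ.measurableSpace_le).aestronglyMeasurable (ae_of_all _ hbC)
  simp_rw [mul_sub]
  rw [integral_sub (hb_int τ hτ hτT) (hb_int σ hσ hσT),
    h.integral_mul_stoppedValue_of_continuous hcont hτ hτT hb' hbC,
    h.integral_mul_stoppedValue_of_continuous hcont hσ hσT hb hbC, sub_self]

end OptionalSampling

end MeasureTheory

def pathFiltration : Filtration ℝ≥0 instMSOmega where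
  seq t := F t
  mono' _ _ h := F_mono (ENNReal.coe_le_coe.mpr h)
  le' _ := F_mono le_top

lemma measurable_eval_pathFiltration (t : ℝ≥0) :
    Measurable[pathFiltration t] fun ω : Omega => ω t :=
  measurable_iff_comap_le.mpr (le_iSup₂_of_le t le_rfl le_rfl)

lemma isStronglyProgressive_eval :
    IsStronglyProgressive pathFiltration fun t (ω : Omega) => ω t :=
  StronglyAdapted.isStronglyProgressive_of_continuous
    (fun t => (measurable_eval_pathFiltration t).stronglyMeasurable) fun ω => ω.2

namespace SimpleStrategy

variable (G : SimpleStrategy) (t : ℝ≥0)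

lemma measurableSet_τ_le (n : ℕ) (s : ℝ≥0∞) : MeasurableSet[F s] {ω | G.τ n ω ≤ s} := by
  have h := G.isStopping n s
  simp only [WithTop.coe_le_coe] at h
  exact h

lemma τ_mono (ω : Omega) : Monotone (G.τ · ω) := monotone_nat_of_le_succ (G.mono · ω)

def stopTime (n : ℕ) (ω : Omega) : ℝ≥0 := (G.τ n ω ⊓ t).toNNReal

/-- `bet n` is only `F_{τ n}`-measurable and may look beyond time `t` on `{t ≤ τ n}`, where the
gain up to time `t` vanishes anyway; the cut-off bet is measurable at the stopped time. -/
def cutBet (n : ℕ) (ω : Omega) : ℝ := if G.τ n ω < t then G.bet n ω else 0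

def gain (n : ℕ) (ω : Omega) : ℝ :=
  G.bet n ω * (ω (G.stopTime t (n + 1) ω) - ω (G.stopTime t n ω))

def partialCapital (c : ℝ) (N : ℕ) (ω : Omega) : ℝ := c + ∑ n ∈ Finset.range N, G.gain t n ω

variable {G t}

lemma coe_stopTime {n : ℕ} {ω : Omega} : (G.stopTime t n ω : ℝ≥0∞) = G.τ n ω ⊓ t :=
  ENNReal.coe_toNNReal (ne_top_of_le_ne_top ENNReal.coe_ne_top inf_le_right)

lemma stopTime_le {n : ℕ} {ω : Omega} : G.stopTime t n ω ≤ t := by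
  rw [← ENNReal.coe_le_coe, coe_stopTime]
  exact inf_le_right

lemma stopTime_mono (ω : Omega) : Monotone (G.stopTime t · ω) := fun _ _ h => by
  rw [← ENNReal.coe_le_coe, coe_stopTime, coe_stopTime]
  exact inf_le_inf_right _ (G.τ_mono ω h)

lemma stopTime_eq_of_le {n : ℕ} {ω : Omega} (h : (t : ℝ≥0∞) ≤ G.τ n ω) : G.stopTime t n ω = t := by
  rw [← ENNReal.coe_inj, coe_stopTime, inf_eq_right.mpr h]

lemma stopTime_le_iff {n : ℕ} {ω : Omega} {u : ℝ≥0} (hu : u < t) :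
    G.stopTime t n ω ≤ u ↔ G.τ n ω ≤ u := by
  rw [← ENNReal.coe_le_coe, coe_stopTime, inf_le_iff, ENNReal.coe_le_coe, or_iff_left hu.not_ge]

variable (G t)

lemma isStoppingTime_stopTime (n : ℕ) :
    IsStoppingTime pathFiltration fun ω => (G.stopTime t n ω : WithTop ℝ≥0) := by
  intro u
  simp only [WithTop.coe_le_coe]
  rcases lt_or_ge u t with hu | hu
  · simp_rw [stopTime_le_iff hu]
    exact G.measurableSet_τ_le n u
  · simp_rw [stopTime_le.trans hu, ofPred_true]
    exact MeasurableSet.univ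

lemma measurable_cutBet (n : ℕ) : Measurable[F t] (G.cutBet t n) := by
  intro B hB
  have hbet := (G.isStopping n).measurableSet_inter_lt (G.bet_measurable n hB) t
  have hlt := (G.isStopping n).measurableSet_lt (t : ℝ≥0∞)
  simp only [WithTop.coe_lt_coe] at hbet hlt
  have hB_eq : G.cutBet t n ⁻¹' B = (G.bet n ⁻¹' B ∩ {ω | G.τ n ω < t}) ∪
      ({ω | G.τ n ω < t}ᶜ ∩ {_ω | (0 : ℝ) ∈ B}) := by
    ext ω
    by_cases hω : G.τ n ω < t <;> simp [cutBet, hω]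
  rw [hB_eq]
  exact hbet.union (hlt.compl.inter (MeasurableSet.const _))

lemma measurable_cutBet_stopTime (n : ℕ) :
    Measurable[(G.isStoppingTime_stopTime t n).measurableSpace] (G.cutBet t n) := by
  intro B hB
  have hA := G.measurable_cutBet t n hB
  refine ⟨le_iSup (fun i => pathFiltration i) t _ hA, fun u => ?_⟩
  simp only [WithTop.coe_le_coe]
  rcases lt_or_ge u t with hu | hu
  · have hbet := (G.bet_measurable n hB).2 u
    simp only [WithTop.coe_le_coe] at hbet
    have hset : G.cutBet t n ⁻¹' B ∩ {ω | G.stopTime t n ω ≤ u}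
        = G.bet n ⁻¹' B ∩ {ω | G.τ n ω ≤ u} := by
      ext ω
      simp only [mem_inter_iff, mem_preimage, mem_ofPred_eq, stopTime_le_iff hu]
      refine and_congr_left fun hω => ?_
      rw [cutBet, if_pos (hω.trans_lt (ENNReal.coe_lt_coe.mpr hu))]
    rw [hset]
    exact hbet
  · simp_rw [stopTime_le.trans hu, ofPred_true, inter_univ]
    exact pathFiltration.mono hu _ hA

variable {G t}

lemma exists_norm_cutBet_le (n : ℕ) : ∃ C, ∀ ω, ‖G.cutBet t n ω‖ ≤ C := by
  obtain ⟨C, hC⟩ := G.bet_bounded n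
  refine ⟨max C 0, fun ω => ?_⟩
  unfold cutBet
  split_ifs
  · exact (hC ω).trans (le_max_left _ _)
  · simp

lemma gain_eq_cutBet_mul (n : ℕ) (ω : Omega) :
    G.gain t n ω = G.cutBet t n ω * (ω (G.stopTime t (n + 1) ω) - ω (G.stopTime t n ω)) := by
  unfold gain cutBet
  split_ifs with h
  · rfl
  · rw [not_lt] at h
    rw [stopTime_eq_of_le h, stopTime_eq_of_le (h.trans (G.mono n ω)), sub_self, mul_zero,
      mul_zero]

lemma partialCapital_eq_simpleCapital_stopTime (c : ℝ) (N : ℕ) (ω : Omega) :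
    G.partialCapital t c N ω = simpleCapital G c (G.stopTime t N ω) ω := by
  have hcoe : (G.stopTime t N ω : ℝ≥0∞) = G.τ N ω ⊓ t := coe_stopTime
  rw [simpleCapital, partialCapital, tsum_eq_sum (s := Finset.range N)]
  · refine congrArg (c + ·) (Finset.sum_congr rfl fun n hn => ?_)
    have hmin {j : ℕ} (hj : j ≤ N) : G.τ j ω ⊓ G.stopTime t N ω = G.τ j ω ⊓ t := by
      rw [hcoe, ← inf_assoc, inf_eq_left.mpr (G.τ_mono ω hj)]
    simp only [gain, evalE, hmin (Finset.mem_range.mp hn), hmin (Finset.mem_range.mp hn).le]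
    rfl
  · intro n hn
    have hle {j : ℕ} (hj : N ≤ j) : (G.stopTime t N ω : ℝ≥0∞) ≤ G.τ j ω :=
      hcoe ▸ inf_le_left.trans (G.τ_mono ω hj)
    rw [Finset.mem_range, not_lt] at hn
    rw [inf_eq_right.mpr (hle hn), inf_eq_right.mpr (hle (hn.trans n.le_succ)), sub_self,
      mul_zero]

lemma tendsto_partialCapital (c : ℝ) (ω : Omega) :
    Tendsto (G.partialCapital t c · ω) atTop (𝓝 (simpleCapital G c t ω)) := by
  refine tendsto_const_nhds.congr' (EventuallyEq.symm ?_)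
  filter_upwards [(G.tendsto_top ω).eventually (lt_mem_nhds ENNReal.coe_lt_top)] with N hN
  rw [partialCapital_eq_simpleCapital_stopTime, stopTime_eq_of_le hN.le]

variable (G t)

lemma measurable_bet (n : ℕ) : Measurable (G.bet n) :=
  (G.bet_measurable n).mono (G.isStopping n).measurableSpace_le le_rfl

lemma measurable_eval_stopTime (n : ℕ) : Measurable fun ω : Omega => ω (G.stopTime t n ω) :=
  (measurable_stoppedValue isStronglyProgressive_eval (G.isStoppingTime_stopTime t n)).mono
    ((G.isStoppingTime_stopTime t n).measurableSpace_le_of_le fun _ =>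
      WithTop.coe_le_coe.mpr stopTime_le) le_rfl

lemma measurable_partialCapital (c : ℝ) (N : ℕ) : Measurable (G.partialCapital t c N) :=
  measurable_const.add <| Finset.measurable_sum _ fun n _ =>
    (G.measurable_bet n).mul ((G.measurable_eval_stopTime t (n + 1)).sub
      (G.measurable_eval_stopTime t n))

lemma measurable_simpleCapital (c : ℝ) : Measurable (simpleCapital G c t) :=
  measurable_of_tendsto_metrizable (G.measurable_partialCapital t c) <| tendsto_pi_nhds.mpr
    fun ω => tendsto_partialCapital c ω

end SimpleStrategy

section PathOf

variable {α : Type*} {mα : MeasurableSpace α} {μ : Measure α} {ℱ : Filtration ℝ≥0 mα}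
  {M : ℝ≥0 → α → ℝ} (hcont : ∀ a, Continuous fun t => M t a)

def pathOf (a : α) : Omega := ⟨fun t => M t a, hcont a⟩

lemma comap_pathOf_F_le {m : MeasurableSpace α} {u : ℝ≥0∞}
    (hM : ∀ s : ℝ≥0, (s : ℝ≥0∞) ≤ u → Measurable[m] (M s)) :
    (F u).comap (pathOf hcont) ≤ m := by
  simp only [F, MeasurableSpace.comap_iSup, MeasurableSpace.comap_comp]
  exact iSup₂_le fun s hs => measurable_iff_comap_le.mp (hM s hs)

lemma measurable_pathOf (hM : StronglyAdapted ℱ M) : Measurable (pathOf hcont) :=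
  measurable_iff_comap_le.mpr
    (comap_pathOf_F_le hcont fun s _ => (hM s).measurable.mono (ℱ.le s) le_rfl)

lemma comap_pathOf_le (hM : StronglyAdapted ℱ M) (t : ℝ≥0) :
    (pathFiltration t).comap (pathOf hcont) ≤ ℱ t :=
  comap_pathOf_F_le hcont fun s hs =>
    (hM s).measurable.mono (ℱ.mono (ENNReal.coe_le_coe.mp hs)) le_rfl

section Strategy

variable (G : SimpleStrategy) (t : ℝ≥0)

lemma SimpleStrategy.isStoppingTime_stopTime_pathOf (hM : StronglyAdapted ℱ M) (n : ℕ) :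
    IsStoppingTime ℱ fun a => (G.stopTime t n (pathOf hcont a) : WithTop ℝ≥0) :=
  (G.isStoppingTime_stopTime t n).comp_of_comap_le (φ := pathOf hcont)
    (comap_pathOf_le hcont hM)

lemma SimpleStrategy.stronglyMeasurable_cutBet_pathOf (hM : StronglyAdapted ℱ M) (n : ℕ) :
    StronglyMeasurable[(G.isStoppingTime_stopTime_pathOf hcont t hM n).measurableSpace]
      fun a => G.cutBet t n (pathOf hcont a) :=
  (((G.measurable_cutBet_stopTime t n).comp (comap_measurable _)).mono
    ((G.isStoppingTime_stopTime t n).comap_measurableSpace_le (comap_pathOf_le hcont hM))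
      le_rfl).stronglyMeasurable

lemma MeasureTheory.Martingale.integrable_gain_pathOf [IsFiniteMeasure μ]
    (hmart : Martingale M ℱ μ) (n : ℕ) : Integrable (fun a => G.gain t n (pathOf hcont a)) μ := by
  simp_rw [SimpleStrategy.gain_eq_cutBet_mul]
  obtain ⟨C, hC⟩ := G.exists_norm_cutBet_le (t := t) n
  exact hmart.integrable_mul_sub_stoppedValue_of_continuous hcont
    (G.isStoppingTime_stopTime_pathOf hcont t hmart.stronglyAdapted n)
    (G.isStoppingTime_stopTime_pathOf hcont t hmart.stronglyAdapted (n + 1))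
    (fun a => SimpleStrategy.stopTime_mono _ n.le_succ) (fun a => SimpleStrategy.stopTime_le)
    (G.stronglyMeasurable_cutBet_pathOf hcont t hmart.stronglyAdapted n) (fun a => hC _)

lemma MeasureTheory.Martingale.integral_gain_pathOf [IsFiniteMeasure μ]
    (hmart : Martingale M ℱ μ) (n : ℕ) : ∫ a, G.gain t n (pathOf hcont a) ∂μ = 0 := by
  simp_rw [SimpleStrategy.gain_eq_cutBet_mul]
  obtain ⟨C, hC⟩ := G.exists_norm_cutBet_le (t := t) n
  exact hmart.integral_mul_sub_stoppedValue_eq_zero hcont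
    (G.isStoppingTime_stopTime_pathOf hcont t hmart.stronglyAdapted n)
    (G.isStoppingTime_stopTime_pathOf hcont t hmart.stronglyAdapted (n + 1))
    (fun a => SimpleStrategy.stopTime_mono _ n.le_succ) (fun a => SimpleStrategy.stopTime_le)
    (G.stronglyMeasurable_cutBet_pathOf hcont t hmart.stronglyAdapted n) (fun a => hC _)

lemma MeasureTheory.Martingale.integrable_partialCapital_pathOf [IsFiniteMeasure μ]
    (hmart : Martingale M ℱ μ) (c : ℝ) (N : ℕ) :
    Integrable (fun a => G.partialCapital t c N (pathOf hcont a)) μ :=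
  (integrable_const c).add
    (integrable_finsetSum _ fun n _ => hmart.integrable_gain_pathOf hcont G t n)

lemma MeasureTheory.Martingale.integral_partialCapital_pathOf [IsProbabilityMeasure μ]
    (hmart : Martingale M ℱ μ) (c : ℝ) (N : ℕ) :
    ∫ a, G.partialCapital t c N (pathOf hcont a) ∂μ = c := by
  simp only [SimpleStrategy.partialCapital]
  rw [integral_add (integrable_const c)
      (integrable_finsetSum _ fun n _ => hmart.integrable_gain_pathOf hcont G t n),
    integral_finsetSum _ fun n _ => hmart.integrable_gain_pathOf hcont G t n]
  simp [hmart.integral_gain_pathOf hcont G t]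

end Strategy

lemma MeasureTheory.Martingale.lintegral_simpleCapital_pathOf_le [IsProbabilityMeasure μ]
    (hmart : Martingale M ℱ μ) {G : SimpleStrategy} {c : ℝ}
    (hnn : ∀ u ω, 0 ≤ simpleCapital G c u ω) (t : ℝ≥0) :
    ∫⁻ a, ENNReal.ofReal (simpleCapital G c t (pathOf hcont a)) ∂μ ≤ ENNReal.ofReal c := by
  have hmean N : ∫⁻ a, ENNReal.ofReal (G.partialCapital t c N (pathOf hcont a)) ∂μ
      = ENNReal.ofReal c := by
    rw [← ofReal_integral_eq_lintegral_ofReal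
      (hmart.integrable_partialCapital_pathOf hcont G t c N) (ae_of_all _ fun a => ?_),
      hmart.integral_partialCapital_pathOf hcont G t c N]
    show 0 ≤ G.partialCapital t c N (pathOf hcont a)
    rw [SimpleStrategy.partialCapital_eq_simpleCapital_stopTime]
    exact hnn _ _
  calc ∫⁻ a, ENNReal.ofReal (simpleCapital G c t (pathOf hcont a)) ∂μ
      = ∫⁻ a, liminf (fun N => ENNReal.ofReal (G.partialCapital t c N (pathOf hcont a)))
          atTop ∂μ :=
        lintegral_congr fun a => ((ENNReal.continuous_ofReal.tendsto _).comp
          (SimpleStrategy.tendsto_partialCapital c _)).liminf_eq.symm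
    _ ≤ liminf (fun N => ∫⁻ a, ENNReal.ofReal (G.partialCapital t c N (pathOf hcont a)) ∂μ)
          atTop :=
        lintegral_liminf_le fun N => ENNReal.measurable_ofReal.comp
          ((G.measurable_partialCapital t c N).comp
            (measurable_pathOf hcont hmart.stronglyAdapted))
    _ = ENNReal.ofReal c := by simp only [hmean, liminf_const]

lemma PositiveCapital.measurable_val (S : PositiveCapital) (t : ℝ≥0) : Measurable (S.val t) :=
  Measurable.tsum fun n => ENNReal.measurable_ofReal.comp ((S.G n).measurable_simpleCapital t _)

lemma MeasureTheory.Martingale.lintegral_val_pathOf_le [IsProbabilityMeasure μ]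
    (hmart : Martingale M ℱ μ) (S : PositiveCapital) (t : ℝ≥0) :
    ∫⁻ a, S.val t (pathOf hcont a) ∂μ ≤ S.init := by
  simp only [PositiveCapital.val, PositiveCapital.init]
  rw [lintegral_tsum (f := fun n a => ENNReal.ofReal (simpleCapital (S.G n) (S.c n) t
      (pathOf hcont a))) fun n => (ENNReal.measurable_ofReal.comp
    (((S.G n).measurable_simpleCapital t _).comp
      (measurable_pathOf hcont hmart.stronglyAdapted))).aemeasurable]
  exact ENNReal.tsum_le_tsum fun n => hmart.lintegral_simpleCapital_pathOf_le hcont (S.nonneg n) t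

end PathOf

def SimpleStrategy.idle : SimpleStrategy where
  τ n _ := n
  bet _ _ := 0
  isStopping n := isStoppingTime_const FF n
  mono n _ := by exact_mod_cast n.le_succ
  tendsto_top _ := ENNReal.tendsto_nat_nhds_top
  bet_measurable _ := measurable_const
  bet_bounded _ := ⟨0, fun _ => by simp⟩

lemma SimpleStrategy.simpleCapital_idle (c : ℝ) (t : ℝ≥0) (ω : Omega) :
    simpleCapital idle c t ω = c := by
  simp [simpleCapital, idle]

def PositiveCapital.one : PositiveCapital where
  G _ := .idle
  c n := if n = 0 then 1 else 0
  c_nonneg n := by positivity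
  c_summable := (hasSum_ite_eq 0 1).summable
  nonneg n t ω := by
    rw [SimpleStrategy.simpleCapital_idle]
    positivity

lemma PositiveCapital.val_one (t : ℝ≥0) (ω : Omega) : one.val t ω = 1 := by
  simp [val, one, SimpleStrategy.simpleCapital_idle, apply_ite ENNReal.ofReal]

lemma PositiveCapital.init_one : one.init = 1 := by
  simp [init, one, apply_ite ENNReal.ofReal]

lemma outerContent_le_one (E : Set Omega) : outerContent E ≤ 1 :=
  iInf₂_le_of_le .one (fun ω _ => by simp [PositiveCapital.val_one]) PositiveCapital.init_one.le

/-- if the sample paths of some continuous martingale belong to `E` almost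
surely, then `P̄(E) = 1`. -/
theorem outerContent_eq_one_of_martingale (E : Set Omega)
    (α : Type) [MeasurableSpace α] (μ : Measure α) [IsProbabilityMeasure μ]
    (ℱ : Filtration ℝ≥0 (by infer_instance : MeasurableSpace α))
    (M : ℝ≥0 → α → ℝ) (hcont : ∀ a, Continuous fun t => M t a)
    (hmart : Martingale M ℱ μ)
    (hpaths : ∀ᵐ a ∂μ, (⟨fun t => M t a, hcont a⟩ : Omega) ∈ E) :
    outerContent E = 1 := by
  refine le_antisymm (outerContent_le_one E) (le_iInf₂ fun S hS => ?_)
  calc 1 = ∫⁻ _, 1 ∂μ := by simp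
    _ ≤ ∫⁻ a, liminf (fun t => S.val t (pathOf hcont a)) atTop ∂μ :=
        lintegral_mono_ae (hpaths.mono fun a ha => hS _ ha)
    _ ≤ liminf (fun t => ∫⁻ a, S.val t (pathOf hcont a) ∂μ) atTop :=
        lintegral_liminf_le fun t =>
          (S.measurable_val t).comp (measurable_pathOf hcont hmart.stronglyAdapted)
    _ ≤ liminf (fun _ => S.init) atTop :=
        liminf_le_liminf (Eventually.of_forall (hmart.lintegral_val_pathOf_le hcont S))
    _ = S.init := liminf_const _
end
end
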